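/- arXiv:0710.2573 — 2 statements merged into one kernel-verified Lean document; each statement's English description precedes it below -/
import Mathlib

section
/- Let Γ be a connected finite simple graph and let v_i, v_j be vertices with d(v_i, v_j) ≥ 3. Let K be a connected component of Γ \ S_i and Q a connected component of Γ \ S_j. If v_i ∈ Q and v_j ∉ K, then K ⊆ Q. -/
def gstar {V : Type*} (G : SimpleGraph V) (v : V) : Set V := {u | u = v ∨ G.Adj v u}

def IsCompOf {V : Type*} (G : SimpleGraph V) (s K : Set V) : Prop :=
  K.Nonempty ∧ K ⊆ s ∧ (G.induce K).Connected ∧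
    ∀ K' : Set V, K ⊆ K' → K' ⊆ s → (G.induce K').Connected → K' = K

/-! Since `K` avoids `S_j` and touches `S_i ⊆ Q`, the set `K ∪ Q` is connected and avoids `S_j`,
so maximality of `Q` forces `K ⊆ Q`. The edge from `K` to `S_i` exists because `Γ` is connected,
and `S_i ⊆ Q`, `j ∉ K` both use that the stars are disjoint when `d(i, j) ≥ 3`. -/

section

open SimpleGraph

variable {V : Type*} {G : SimpleGraph V}

lemma self_mem_gstar (v : V) : v ∈ gstar G v := Or.inl rfl

lemma dist_le_one_of_mem_gstar {u v : V} (hu : u ∈ gstar G v) : G.dist v u ≤ 1 := by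
  rcases hu with rfl | hadj
  · simp
  · exact (dist_eq_one_iff_adj.2 hadj).le

lemma disjoint_gstar_of_three_le_dist (hconn : G.Connected) {i j : V} (hd : 3 ≤ G.dist i j) :
    Disjoint (gstar G i) (gstar G j) := by
  refine Set.disjoint_left.2 fun u hui huj => ?_
  have hiu := dist_le_one_of_mem_gstar hui
  have hju := dist_le_one_of_mem_gstar huj
  have := hconn.dist_triangle (u := i) (v := u) (w := j)
  rw [dist_comm (u := u)] at this
  omega

namespace IsCompOf

variable {s K Q : Set V}

lemma subset (hK : IsCompOf G s K) : K ⊆ s := hK.2.1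

lemma connected (hK : IsCompOf G s K) : (G.induce K).Connected := hK.2.2.1

lemma subset_of_adj (hQ : IsCompOf G s Q) {L : Set V} (hL : (G.induce L).Connected)
    (hLs : L ⊆ s) {a b : V} (ha : a ∈ L) (hb : b ∈ Q) (hab : G.Adj a b) : L ⊆ Q := by
  have hunion : L ∪ Q = Q :=
    hQ.2.2.2 _ Set.subset_union_right (Set.union_subset hLs hQ.subset)
      (connected_induce_union hL.preconnected hQ.connected.preconnected ha hb hab)
  exact hunion ▸ Set.subset_union_left

lemma mem_of_adj (hK : IsCompOf G s K) {x y : V} (hx : x ∈ K) (hy : y ∈ s)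
    (hadj : G.Adj x y) : y ∈ K :=
  hK.subset_of_adj (induce_pair_connected_of_adj hadj.symm)
    (Set.insert_subset hy (Set.singleton_subset_iff.2 (hK.subset hx))) (Set.mem_insert y _)
    hx hadj.symm (Set.mem_insert y _)

lemma gstar_subset (hK : IsCompOf G s K) {v : V} (hv : v ∈ K) (hstar : gstar G v ⊆ s) :
    gstar G v ⊆ K := by
  rintro u (rfl | hadj)
  · exact hv
  · exact hK.mem_of_adj hv (hstar (Or.inr hadj)) hadj

lemma subset_compl_gstar (hK : IsCompOf G s K) {v : V} (hvs : v ∈ s) (hvK : v ∉ K) :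
    K ⊆ (gstar G v)ᶜ := by
  rintro x hx (rfl | hadj)
  · exact hvK hx
  · exact hvK (hK.mem_of_adj hx hvs hadj.symm)

lemma exists_adj_notMem (hK : IsCompOf G s K) (hconn : G.Connected) {v : V} (hv : v ∉ s) :
    ∃ a ∈ K, ∃ b ∉ s, G.Adj a b := by
  obtain ⟨k, hk⟩ := hK.1
  obtain ⟨d, -, hdK, hdK'⟩ := (hconn.preconnected k v).some.exists_boundary_dart K hk
    (fun hvK => hv (hK.subset hvK))
  exact ⟨d.fst, hdK, d.snd, fun hds => hdK' (hK.mem_of_adj hdK hds d.adj), d.adj⟩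

end IsCompOf

end

theorem stmt2_general {V : Type*} (G : SimpleGraph V) (hconn : G.Connected)
    (i j : V) (hd : 3 ≤ G.dist i j)
    (K Q : Set V)
    (hK : IsCompOf G ((gstar G i)ᶜ) K) (hQ : IsCompOf G ((gstar G j)ᶜ) Q)
    (hiQ : i ∈ Q) (hjK : j ∉ K) :
    K ⊆ Q := by
  have hdisj := disjoint_gstar_of_three_le_dist hconn hd
  have hstarQ : gstar G i ⊆ Q := hQ.gstar_subset hiQ hdisj.subset_compl_right
  have hKj : K ⊆ (gstar G j)ᶜ :=
    hK.subset_compl_gstar (hdisj.subset_compl_left (self_mem_gstar j)) hjK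
  obtain ⟨a, ha, b, hb, hab⟩ := hK.exists_adj_notMem hconn (not_not.2 (self_mem_gstar i))
  exact hQ.subset_of_adj hK.connected hKj ha (hstarQ (not_not.1 hb)) hab

theorem stmt2 {V : Type*} [Fintype V] (G : SimpleGraph V) (hconn : G.Connected)
    (i j : V) (hd : 3 ≤ G.dist i j)
    (K Q : Set V)
    (hK : IsCompOf G ((gstar G i)ᶜ) K) (hQ : IsCompOf G ((gstar G j)ᶜ) Q)
    (hiQ : i ∈ Q) (hjK : j ∉ K) :
    K ⊆ Q :=
  stmt2_general G hconn i j hd K Q hK hQ hiQ hjK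
end

section
/- Let W be the graph product of cyclic groups determined by a labeled graph (Γ, m). For each vertex v_j, the centralizer of v_j in W is the special subgroup generated by the star S_j of v_j (i.e., by v_j together with its neighbors). -/
/-!
Fix a vertex `t` outside the star of `j`. Then `W` is the amalgamated product
`W(Γ - t) *_{W(lk t)} W(st t)`, and `v_j` lies in the first factor. It is not conjugate into
`W(lk t)`: the retraction of `W` onto `⟨v_j⟩ ≅ ℤ/m_j` kills `W(lk t)` but not `v_j`, because
`m_j ≠ 1`. In an amalgam, the centralizer of a factor element that is not conjugate into the base
lies in that factor: write `x = a₀ g₁ ⋯ gₙ a₁` with `g₁ ⋯ gₙ` reduced and neither `g₁` nor `gₙ` in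
the factor; if `n > 0`, then `v_j x = x v_j` exhibits one element as two reduced words with
different sequences of factors. Hence the centralizer of `v_j` lies in `W(Γ - t)`, and induction
on the number of vertices outside the star of `j` concludes.

A special subgroup `W_p` is modelled as the graph product over the same graph with the orders
`p.mulIndicator m`, i.e. with the generators outside `p` killed.
-/

/-- Defining relations of the graph product of cyclic groups `W(Γ, m)`.
`m i = 0` encodes infinite order (and gives the trivial relation). -/
def grels {N : ℕ} (G : SimpleGraph (Fin N)) (m : Fin N → ℕ) : Set (FreeGroup (Fin N)) :=
  {r | (∃ i, r = FreeGroup.of i ^ m i) ∨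
    ∃ i j, G.Adj i j ∧
      r = FreeGroup.of i * FreeGroup.of j * (FreeGroup.of i)⁻¹ * (FreeGroup.of j)⁻¹}

namespace Monoid.PushoutI

open CoprodI NormalWord

variable {ι : Type*} {G : ι → Type*} {H : Type*} [∀ i, Group (G i)] [Group H]
  {φ : ∀ i, H →* G i}

variable (φ) in
def listProd (l : List (Σ i, G i)) : PushoutI φ :=
  (l.map fun x => of x.1 x.2).prod

@[simp]
theorem listProd_nil : listProd φ [] = 1 := rfl

@[simp]
theorem listProd_cons (x : Σ i, G i) (l : List (Σ i, G i)) :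
    listProd φ (x :: l) = of x.1 x.2 * listProd φ l := by
  simp [listProd]

@[simp]
theorem listProd_append (l₁ l₂ : List (Σ i, G i)) :
    listProd φ (l₁ ++ l₂) = listProd φ l₁ * listProd φ l₂ := by
  simp [listProd]

variable (φ) in
def IsReducedList (l : List (Σ i, G i)) : Prop :=
  (∀ x ∈ l, x.2 ∉ (φ x.1).range) ∧ l.IsChain fun a b => a.1 ≠ b.1

namespace IsReducedList

variable {l l' : List (Σ i, G i)}

theorem of_infix (hl : IsReducedList φ l) (h : l' <:+: l) : IsReducedList φ l' :=
  ⟨fun x hx => hl.1 x (h.subset hx), hl.2.infix h⟩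

theorem cons (hl : IsReducedList φ l) {i : ι} {g : G i} (hg : g ∉ (φ i).range)
    (hhead : ∀ y ∈ l.head?, y.1 ≠ i) : IsReducedList φ (⟨i, g⟩ :: l) :=
  ⟨List.forall_mem_cons.2 ⟨hg, hl.1⟩, List.isChain_cons.2 ⟨fun y hy => (hhead y hy).symm, hl.2⟩⟩

theorem concat (hl : IsReducedList φ l) {i : ι} {g : G i} (hg : g ∉ (φ i).range)
    (hlast : ∀ y ∈ l.getLast?, y.1 ≠ i) : IsReducedList φ (l ++ [⟨i, g⟩]) :=
  ⟨List.forall_mem_append.2 ⟨hl.1, by simpa using hg⟩,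
    hl.2.append (List.isChain_singleton _) (by simpa using hlast)⟩

theorem exists_word (hl : IsReducedList φ l) :
    ∃ w : Word G, Reduced φ w ∧ w.toList = l :=
  ⟨⟨l, fun x hx h1 => hl.1 x hx (h1 ▸ one_mem _), hl.2⟩, fun x hx => hl.1 x hx, rfl⟩

theorem map_fst_eq_of_listProd_eq (hφ : ∀ i, Function.Injective (φ i))
    {l₁ l₂ : List (Σ i, G i)} (h₁ : IsReducedList φ l₁) (h₂ : IsReducedList φ l₂)
    (h : listProd φ l₁ = listProd φ l₂) : l₁.map Sigma.fst = l₂.map Sigma.fst := by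
  obtain ⟨d⟩ := transversal_nonempty φ hφ
  obtain ⟨w₁, hw₁, rfl⟩ := h₁.exists_word
  obtain ⟨w₂, hw₂, rfl⟩ := h₂.exists_word
  obtain ⟨v₁, hv₁, hfst₁⟩ := hw₁.exists_normalWord_prod_eq d
  obtain ⟨v₂, hv₂, hfst₂⟩ := hw₂.exists_normalWord_prod_eq d
  have hprod (w : Word G) : ofCoprodI w.prod = listProd φ w.toList := by
    simp [Word.prod, listProd, map_list_prod, Function.comp_def]
  have hv : v₁.prod = v₂.prod := by rw [hv₁, hv₂, hprod, hprod, h]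
  rw [← hfst₁, ← hfst₂, prod_injective hv]

theorem exists_eq_of_mul_listProd (hl : IsReducedList φ l) (i : ι) :
    ∃ (a : G i) (l' : List (Σ i, G i)), IsReducedList φ l' ∧ (∀ y ∈ l'.head?, y.1 ≠ i) ∧
      listProd φ l = of i a * listProd φ l' := by
  rcases l with _ | ⟨⟨k, g⟩, r⟩
  · exact ⟨1, [], hl, by simp, by simp⟩
  · by_cases hk : k = i
    · subst hk
      exact ⟨g, r, hl.of_infix (List.suffix_cons _ _).isInfix,
        fun y hy => ((List.isChain_cons.1 hl.2).1 y hy).symm, listProd_cons _ _⟩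
    · exact ⟨1, _, hl, by simpa using hk, by simp⟩

theorem exists_eq_listProd_mul_of (hl : IsReducedList φ l) (i : ι) :
    ∃ (a : G i) (l' : List (Σ i, G i)), IsReducedList φ l' ∧ (∀ y ∈ l'.getLast?, y.1 ≠ i) ∧
      l' <+: l ∧ listProd φ l = listProd φ l' * of i a := by
  rcases l.eq_nil_or_concat' with rfl | ⟨r, ⟨k, g⟩, rfl⟩
  · exact ⟨1, [], hl, by simp, List.prefix_refl _, by simp⟩
  · by_cases hk : k = i
    · subst hk
      exact ⟨g, r, hl.of_infix (List.prefix_append _ _).isInfix,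
        fun y hy => (List.isChain_append.1 hl.2).2.2 y hy _ rfl, List.prefix_append _ _,
        by simp⟩
    · exact ⟨1, _, hl, by simpa using hk, List.prefix_refl _, by simp⟩

theorem exists_eq_of_mul_listProd_mul_of (hl : IsReducedList φ l) (i : ι) :
    ∃ (a₀ a₁ : G i) (l' : List (Σ i, G i)), IsReducedList φ l' ∧ (∀ y ∈ l'.head?, y.1 ≠ i) ∧
      (∀ y ∈ l'.getLast?, y.1 ≠ i) ∧ listProd φ l = of i a₀ * listProd φ l' * of i a₁ := by
  obtain ⟨a₀, l₁, hl₁, hhead, heq₁⟩ := hl.exists_eq_of_mul_listProd i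
  obtain ⟨a₁, l₂, hl₂, hlast, ⟨s, rfl⟩, heq₂⟩ := hl₁.exists_eq_listProd_mul_of i
  refine ⟨a₀, a₁, l₂, hl₂, fun y hy => hhead y ?_, hlast, by rw [heq₁, heq₂, mul_assoc]⟩
  simp [List.head?_append, Option.mem_def.1 hy]

end IsReducedList

theorem exists_isReducedList_eq_base_mul_listProd (hφ : ∀ i, Function.Injective (φ i))
    (x : PushoutI φ) :
    ∃ (h : H) (l : List (Σ i, G i)), IsReducedList φ l ∧ x = base φ h * listProd φ l := by
  classical
  obtain ⟨d⟩ := transversal_nonempty φ hφ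
  let w : NormalWord d := x • empty
  refine ⟨w.head, w.toList, ⟨fun y hy ⟨h, hh⟩ => w.ne_one y hy ?_, w.chain_ne⟩, ?_⟩
  · -- `y.2` lies both in the range of `φ` and in the transversal, as does `1`
    have := (d.compl y.1).1 (a₁ := (⟨y.2, h, hh⟩, ⟨1, d.one_mem _⟩))
      (a₂ := (⟨1, one_mem _⟩, ⟨y.2, w.normalized y.1 y.2 hy⟩)) (by simp)
    exact congrArg (fun p => (p.1 : G y.1)) this
  · have hw : w.prod = x := by simp [w]
    rw [← hw, NormalWord.prod]
    simp [Word.prod, listProd, map_list_prod, Function.comp_def]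

theorem centralizer_of_le_range_of (hφ : ∀ i, Function.Injective (φ i)) {i : ι} {a : G i}
    (ha : ∀ c : PushoutI φ, c⁻¹ * of i a * c ∉ (base φ).range) :
    Subgroup.centralizer {of i a} ≤ (of (φ := φ) i).range := by
  intro x hx
  have hcomm : of i a * x = x * of i a := Subgroup.mem_centralizer_iff.1 hx _ rfl
  obtain ⟨h, l, hl, rfl⟩ := exists_isReducedList_eq_base_mul_listProd hφ x
  obtain ⟨a₀, a₁, l', hl', hhead, hlast, heq⟩ := hl.exists_eq_of_mul_listProd_mul_of i
  set b := φ i h * a₀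
  have hx : base φ h * listProd φ l = of i b * listProd φ l' * of i a₁ := by
    rw [heq, ← of_apply_eq_base φ i, map_mul, mul_assoc, mul_assoc, mul_assoc]
  rw [hx] at hcomm ⊢
  rcases eq_or_ne l' [] with rfl | hne
  · exact ⟨b * a₁, by simp⟩
  have hconj (c : G i) : c⁻¹ * a * c ∉ (φ i).range := fun ⟨z, hz⟩ =>
    ha (of i c) ⟨z, by rw [← of_apply_eq_base φ i, hz]; simp⟩
  have hswap : of i (b⁻¹ * a * b) * listProd φ l' = listProd φ l' * of i (a₁ * a * a₁⁻¹) := by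
    simp only [map_mul, map_inv]
    calc _ = (of i b)⁻¹ * (of i a * (of i b * listProd φ l' * of i a₁)) * (of i a₁)⁻¹ := by
            group
      _ = (of i b)⁻¹ * ((of i b * listProd φ l' * of i a₁) * of i a) * (of i a₁)⁻¹ := by
            rw [hcomm]
      _ = _ := by group
  have hfst := IsReducedList.map_fst_eq_of_listProd_eq hφ (hl'.cons (hconj b) hhead)
    (hl'.concat (by simpa using hconj a₁⁻¹) hlast) (by simpa using hswap)
  obtain ⟨y, l'', rfl⟩ := List.exists_cons_of_ne_nil hne
  simp only [List.map_cons, List.cons_append, List.cons.injEq] at hfst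
  exact absurd hfst.1.symm (hhead y rfl)

end Monoid.PushoutI

def graphProductRels {ι : Type*} (G : SimpleGraph ι) (m : ι → ℕ) : Set (FreeGroup ι) :=
  {r | (∃ i, r = FreeGroup.of i ^ m i) ∨
    ∃ i j, G.Adj i j ∧
      r = FreeGroup.of i * FreeGroup.of j * (FreeGroup.of i)⁻¹ * (FreeGroup.of j)⁻¹}

abbrev GraphProduct {ι : Type*} (G : SimpleGraph ι) (m : ι → ℕ) :=
  PresentedGroup (graphProductRels G m)

namespace GraphProduct

open Monoid PresentedGroup Set Subgroup

variable {ι : Type*} {G : SimpleGraph ι} {m : ι → ℕ}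

theorem of_pow_eq_one (i : ι) : (of i : GraphProduct G m) ^ m i = 1 := by
  have h := one_of_mem (rels := graphProductRels G m) (Or.inl ⟨i, rfl⟩)
  rwa [map_pow] at h

theorem commute_of_of {i k : ι} (h : G.Adj i k) :
    Commute (of i : GraphProduct G m) (of k) := by
  have h := one_of_mem (rels := graphProductRels G m) (Or.inr ⟨i, k, h, rfl⟩)
  simp only [map_mul, map_inv] at h
  exact commutatorElement_eq_one_iff_commute.1 h

def lift {K : Type*} [Group K] (f : ι → K) (hpow : ∀ i, f i ^ m i = 1)
    (hcomm : ∀ i k, G.Adj i k → Commute (f i) (f k)) : GraphProduct G m →* K :=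
  toGroup (f := f) <| by
    rintro r (⟨i, rfl⟩ | ⟨i, k, h, rfl⟩)
    · simp only [map_pow, FreeGroup.lift_apply_of, hpow]
    · simpa [commutatorElement_def] using commutatorElement_eq_one_iff_commute.2 (hcomm i k h)

@[simp]
theorem lift_of {K : Type*} [Group K] (f : ι → K) (hpow : ∀ i, f i ^ m i = 1)
    (hcomm : ∀ i k, G.Adj i k → Commute (f i) (f k)) (i : ι) :
    lift f hpow hcomm (of i : GraphProduct G m) = f i :=
  toGroup.of _

theorem of_eq_one_of_notMem {p : Set ι} {i : ι} (hi : i ∉ p) :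
    (of i : GraphProduct G (p.mulIndicator m)) = 1 := by
  simpa [mulIndicator_of_notMem hi] using of_pow_eq_one (G := G) (m := p.mulIndicator m) i

theorem of_pow_eq_one_of_mem {p : Set ι} {i : ι} (hi : i ∈ p) :
    (of i : GraphProduct G (p.mulIndicator m)) ^ m i = 1 := by
  simpa [mulIndicator_of_mem hi] using of_pow_eq_one (G := G) (m := p.mulIndicator m) i

noncomputable def mulIndicatorHom {m₁ m₂ : ι → ℕ} (p : Set ι) (h : ∀ i ∈ p, m₂ i ∣ m₁ i) :
    GraphProduct G m₁ →* GraphProduct G m₂ :=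
  lift (p.mulIndicator of)
    (fun i => by
      by_cases hi : i ∈ p
      · obtain ⟨k, hk⟩ := h i hi
        rw [mulIndicator_of_mem hi, hk, pow_mul, of_pow_eq_one, one_pow]
      · rw [mulIndicator_of_notMem hi, one_pow])
    (fun i k hik => by
      by_cases hi : i ∈ p <;> by_cases hk : k ∈ p <;>
        simp [mulIndicator_of_mem, mulIndicator_of_notMem, hi, hk, commute_of_of hik])

@[simp]
theorem mulIndicatorHom_of {m₁ m₂ : ι → ℕ} (p : Set ι) (h : ∀ i ∈ p, m₂ i ∣ m₁ i) (i : ι) :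
    mulIndicatorHom p h (of i : GraphProduct G m₁) = p.mulIndicator of i :=
  lift_of _ _ _ _

theorem mulIndicatorHom_injective {p q : Set ι} (hpq : p ⊆ q)
    (h : ∀ i ∈ p, q.mulIndicator m i ∣ p.mulIndicator m i) :
    Function.Injective (mulIndicatorHom (G := G) p h) := by
  let r : GraphProduct G (q.mulIndicator m) →* GraphProduct G (p.mulIndicator m) :=
    mulIndicatorHom p fun i hi => by rw [mulIndicator_of_mem hi, mulIndicator_of_mem (hpq hi)]
  have hr : r.comp (mulIndicatorHom p h) = MonoidHom.id _ := by
    refine PresentedGroup.ext fun i => ?_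
    by_cases hi : i ∈ p
    · simp [r, mulIndicator_of_mem hi]
    · simp [r, of_eq_one_of_notMem hi]
  exact Function.LeftInverse.injective (DFunLike.congr_fun hr)

variable (m) in
noncomputable abbrev specialInclusion (p : Set ι) :
    GraphProduct G (p.mulIndicator m) →* GraphProduct G m :=
  mulIndicatorHom p fun i hi => by rw [mulIndicator_of_mem hi]

theorem closure_image_of_eq_top {s : Set ι} (h : ∀ t ∉ s, m t = 1) :
    closure (of '' s : Set (GraphProduct G m)) = ⊤ := by
  rw [eq_top_iff, ← closure_range_of, closure_le]
  rintro _ ⟨k, rfl⟩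
  by_cases hk : k ∈ s
  · exact subset_closure ⟨k, hk, rfl⟩
  · have hk1 : (of k : GraphProduct G m) = 1 := by
      simpa [h k hk] using of_pow_eq_one (G := G) (m := m) k
    exact hk1 ▸ one_mem _

variable (G m) in
noncomputable def toZMod (j : ι) : GraphProduct G m →* Multiplicative (ZMod (m j)) :=
  lift (({j} : Set ι).mulIndicator fun _ => Multiplicative.ofAdd 1)
    (fun i => by
      by_cases hi : i = j
      · subst hi
        rw [mulIndicator_of_mem (mem_singleton i), ← ofAdd_nsmul, nsmul_one, ZMod.natCast_self,
          ofAdd_zero]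
      · rw [mulIndicator_of_notMem (s := {j}) hi, one_pow])
    (fun _ _ _ => Commute.all _ _)

theorem conj_of_notMem_range_mulIndicatorHom {m' : ι → ℕ} {p : Set ι} (h : ∀ i ∈ p, m i ∣ m' i)
    {j : ι} (hjp : j ∉ p) (hj : m j ≠ 1) (c : GraphProduct G m) :
    c⁻¹ * of j * c ∉ (mulIndicatorHom (G := G) p h).range := by
  rintro ⟨z, hz⟩
  have hker : (toZMod G m j).comp (mulIndicatorHom p h) = 1 := PresentedGroup.ext fun i => by
    by_cases hi : i ∈ p
    · have hij : i ≠ j := fun e => hjp (e ▸ hi)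
      simp [toZMod, mulIndicator_of_mem hi, hij]
    · simp [mulIndicator_of_notMem hi]
  have hz' := congrArg (toZMod G m j) hz
  rw [← MonoidHom.comp_apply, hker, map_mul, map_mul, map_inv, mul_comm _ (toZMod G m j c),
    mul_inv_cancel_left] at hz'
  have : Nontrivial (ZMod (m j)) := ZMod.nontrivial_iff.2 hj
  simp only [toZMod, lift_of, mulIndicator_of_mem (mem_singleton j)] at hz'
  exact one_ne_zero (ofAdd_eq_one.1 hz'.symm)

variable (G) in
def amalgamFactor (t : ι) (b : Bool) : Set ι := cond b (insert t (G.neighborSet t)) {t}ᶜ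

theorem neighborSet_subset_amalgamFactor (t : ι) : ∀ b, G.neighborSet t ⊆ amalgamFactor G t b
  | true => subset_insert _ _
  | false => fun _ hi => (G.ne_of_adj hi).symm

variable (G m) in
noncomputable def amalgamMap (t : ι) (b : Bool) :
    GraphProduct G ((G.neighborSet t).mulIndicator m) →*
      GraphProduct G ((amalgamFactor G t b).mulIndicator m) :=
  mulIndicatorHom (G.neighborSet t) fun _ hi => by
    rw [mulIndicator_of_mem hi, mulIndicator_of_mem (neighborSet_subset_amalgamFactor t b hi)]

theorem amalgamMap_injective (t : ι) (b : Bool) : Function.Injective (amalgamMap G m t b) :=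
  mulIndicatorHom_injective (neighborSet_subset_amalgamFactor t b) _

theorem pushoutOf_of_eq_base {t i : ι} (hi : G.Adj t i) (b : Bool) :
    PushoutI.of (φ := amalgamMap G m t) b (of i) = PushoutI.base _ (of i) := by
  rw [← PushoutI.of_apply_eq_base _ b]
  simp [amalgamMap, mulIndicator_of_mem (show i ∈ G.neighborSet t from hi)]

variable (G m) in
noncomputable def amalgamGen (t i : ι) : PushoutI (amalgamMap G m t) := by
  classical
  exact if i ∈ insert t (G.neighborSet t) then PushoutI.of true (of i)
    else PushoutI.of false (of i)

theorem amalgamGen_of_mem {t i : ι} (hi : i ∈ insert t (G.neighborSet t)) :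
    amalgamGen G m t i = PushoutI.of true (of i) := by
  simp [amalgamGen, hi]

theorem amalgamGen_of_ne {t i : ι} (hi : i ≠ t) :
    amalgamGen G m t i = PushoutI.of false (of i) := by
  by_cases hadj : G.Adj t i
  · rw [amalgamGen_of_mem (mem_insert_of_mem _ hadj), pushoutOf_of_eq_base hadj,
      pushoutOf_of_eq_base hadj]
  · simp [amalgamGen, hi, hadj]

theorem amalgamGen_pow_eq_one (t i : ι) : amalgamGen G m t i ^ m i = 1 := by
  rcases eq_or_ne i t with rfl | hi
  · rw [amalgamGen_of_mem (mem_insert _ _), ← map_pow,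
      of_pow_eq_one_of_mem (p := amalgamFactor G i true) (mem_insert _ _), map_one]
  · rw [amalgamGen_of_ne hi, ← map_pow,
      of_pow_eq_one_of_mem (p := amalgamFactor G t false) hi, map_one]

theorem commute_amalgamGen {t i k : ι} (h : G.Adj i k) :
    Commute (amalgamGen G m t i) (amalgamGen G m t k) := by
  rcases eq_or_ne i t with rfl | hi
  · rw [amalgamGen_of_mem (mem_insert _ _), amalgamGen_of_mem (mem_insert_of_mem _ h)]
    exact (commute_of_of h).map _
  rcases eq_or_ne k t with rfl | hk
  · rw [amalgamGen_of_mem (mem_insert_of_mem _ h.symm), amalgamGen_of_mem (mem_insert _ _)]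
    exact (commute_of_of h).map _
  · rw [amalgamGen_of_ne hi, amalgamGen_of_ne hk]
    exact (commute_of_of h).map _

variable (G m) in
noncomputable def toAmalgam (t : ι) : GraphProduct G m →* PushoutI (amalgamMap G m t) :=
  lift (amalgamGen G m t) (amalgamGen_pow_eq_one t) fun _ _ => commute_amalgamGen

variable (G m) in
noncomputable def fromAmalgam (t : ι) : PushoutI (amalgamMap G m t) →* GraphProduct G m :=
  PushoutI.lift (fun b => specialInclusion m (amalgamFactor G t b))
    (specialInclusion m (G.neighborSet t)) fun b => PresentedGroup.ext fun i => by
      by_cases hi : i ∈ G.neighborSet t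
      · simp [amalgamMap, mulIndicator_of_mem hi,
          mulIndicator_of_mem (neighborSet_subset_amalgamFactor t b hi)]
      · simp [amalgamMap, mulIndicator_of_notMem hi]

@[simp]
theorem fromAmalgam_base (t : ι) (z : GraphProduct G ((G.neighborSet t).mulIndicator m)) :
    fromAmalgam G m t (PushoutI.base _ z) = specialInclusion m (G.neighborSet t) z :=
  PushoutI.lift_base _ _ _ _

@[simp]
theorem fromAmalgam_of_false (t : ι)
    (y : GraphProduct G ((amalgamFactor G t false).mulIndicator m)) :
    fromAmalgam G m t (PushoutI.of false y) = specialInclusion m (amalgamFactor G t false) y :=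
  PushoutI.lift_of _ _ _ _

theorem fromAmalgam_toAmalgam (t : ι) (x : GraphProduct G m) :
    fromAmalgam G m t (toAmalgam G m t x) = x := by
  suffices (fromAmalgam G m t).comp (toAmalgam G m t) = MonoidHom.id _ from
    DFunLike.congr_fun this x
  refine PresentedGroup.ext fun i => ?_
  by_cases hi : i ∈ insert t (G.neighborSet t)
  · rw [MonoidHom.comp_apply, toAmalgam, lift_of, amalgamGen_of_mem hi, fromAmalgam,
      PushoutI.lift_of, mulIndicatorHom_of, mulIndicator_of_mem (s := amalgamFactor G t true) hi]
    rfl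
  · have hit : i ≠ t := fun e => hi (e ▸ mem_insert _ _)
    rw [MonoidHom.comp_apply, toAmalgam, lift_of, amalgamGen_of_ne hit, fromAmalgam,
      PushoutI.lift_of, mulIndicatorHom_of,
      mulIndicator_of_mem (s := amalgamFactor G t false) (a := i) hit]
    rfl

theorem closure_image_of_le_centralizer (j : ι) :
    closure (of '' insert j (G.neighborSet j) : Set (GraphProduct G m)) ≤
      Subgroup.centralizer {of j} := by
  rw [closure_le]
  rintro _ ⟨k, hk, rfl⟩
  rw [SetLike.mem_coe, mem_centralizer_singleton_iff]
  rcases hk with rfl | hk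
  · rfl
  · exact (commute_of_of hk).symm.eq

theorem map_mulIndicatorHom_closure_image_of_le {m₁ m₂ : ι → ℕ} (p : Set ι)
    (h : ∀ i ∈ p, m₂ i ∣ m₁ i) (s : Set ι) :
    (closure (of '' s : Set (GraphProduct G m₁))).map (mulIndicatorHom p h) ≤
      closure (of '' s) := by
  rw [MonoidHom.map_closure, closure_le]
  rintro _ ⟨_, ⟨k, hk, rfl⟩, rfl⟩
  by_cases hkp : k ∈ p
  · exact subset_closure ⟨k, hk, by simp [mulIndicator_of_mem hkp]⟩
  · simp [mulIndicator_of_notMem hkp]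

theorem centralizer_le_of_amalgam {t j : ι} (hjt : j ∉ insert t (G.neighborSet t))
    (hj : m j ≠ 1)
    (ih : Subgroup.centralizer {(of j : GraphProduct G (({t}ᶜ : Set ι).mulIndicator m))} ≤
      closure (of '' insert j (G.neighborSet j))) :
    Subgroup.centralizer {(of j : GraphProduct G m)} ≤
      closure (of '' insert j (G.neighborSet j)) := by
  have hjt' : j ≠ t := by
    rintro rfl
    exact hjt (mem_insert _ _)
  have hjA : toAmalgam G m t (of j) = PushoutI.of false (of j) := by
    rw [toAmalgam, lift_of, amalgamGen_of_ne hjt']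
  have hconj (c : PushoutI (amalgamMap G m t)) :
      c⁻¹ * PushoutI.of false (of j) * c ∉ (PushoutI.base (amalgamMap G m t)).range := by
    rintro ⟨z, hz⟩
    refine conj_of_notMem_range_mulIndicatorHom (p := G.neighborSet t)
      (fun i hi => by rw [mulIndicator_of_mem hi]) (fun h => hjt (mem_insert_of_mem _ h)) hj
      (fromAmalgam G m t c) ⟨z, ?_⟩
    simpa [← hjA, fromAmalgam_toAmalgam] using congrArg (fromAmalgam G m t) hz
  intro x hx
  have hxA : toAmalgam G m t x * PushoutI.of false (of j) =
      PushoutI.of false (of j) * toAmalgam G m t x := by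
    rw [← hjA, ← map_mul, ← map_mul, mem_centralizer_singleton_iff.1 hx]
  obtain ⟨y, hy⟩ := PushoutI.centralizer_of_le_range_of (amalgamMap_injective t) hconj
    (mem_centralizer_singleton_iff.2 hxA)
  have hyj : y * of j = of j * y :=
    PushoutI.of_injective (amalgamMap_injective t) false <| by rw [map_mul, map_mul, hy, hxA]
  rw [← fromAmalgam_toAmalgam t x, ← hy, fromAmalgam_of_false]
  exact map_mulIndicatorHom_closure_image_of_le _ _ _
    (mem_map_of_mem _ (ih (mem_centralizer_singleton_iff.2 hyj)))

theorem centralizer_of_eq_closure_image_of [Finite ι] {j : ι} (hj : m j ≠ 1) :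
    Subgroup.centralizer {(of j : GraphProduct G m)} =
      closure (of '' insert j (G.neighborSet j)) := by
  classical
  refine le_antisymm ?_ (closure_image_of_le_centralizer j)
  have := Fintype.ofFinite ι
  suffices ∀ (s : Finset ι) (m : ι → ℕ), m j ≠ 1 →
      (∀ t ∉ insert j (G.neighborSet j), m t ≠ 1 → t ∈ s) →
      Subgroup.centralizer {(of j : GraphProduct G m)} ≤
        closure (of '' insert j (G.neighborSet j)) from
    this Finset.univ m hj fun t _ _ => Finset.mem_univ t
  intro s
  induction s using Finset.induction_on with
  | empty =>
    intro m _ hs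
    rw [closure_image_of_eq_top fun t ht => not_not.1 fun h => by simpa using hs t ht h]
    exact le_top
  | @insert t s _ ih =>
    intro m hj hs
    by_cases ht : t ∉ insert j (G.neighborSet j) ∧ m t ≠ 1
    · have hjt : j ∉ insert t (G.neighborSet t) := by
        rintro (rfl | h)
        exacts [ht.1 (mem_insert _ _), ht.1 (mem_insert_of_mem _ h.symm)]
      have hjt' : j ≠ t := by
        rintro rfl
        exact hjt (mem_insert _ _)
      refine centralizer_le_of_amalgam hjt hj (ih _ ?_ fun t' ht' hm' => ?_)
      · rwa [mulIndicator_of_mem hjt']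
      · have ht't : t' ≠ t := by
          rintro rfl
          exact hm' (mulIndicator_of_notMem (not_not.2 rfl) _)
        rw [mulIndicator_of_mem ht't] at hm'
        exact (Finset.mem_insert.1 (hs t' ht' hm')).resolve_left ht't
    · exact ih m hj fun t' ht' hm' => (Finset.mem_insert.1 (hs t' ht' hm')).resolve_left
        (by rintro rfl; exact ht ⟨ht', hm'⟩)

end GraphProduct

theorem stmt10 {N : ℕ} (G : SimpleGraph (Fin N)) (m : Fin N → ℕ)
    (hm : ∀ i, m i = 0 ∨ IsPrimePow (m i)) (j : Fin N) :
    Subgroup.centralizer {(PresentedGroup.of j : PresentedGroup (grels G m))} =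
      Subgroup.closure
        {x : PresentedGroup (grels G m) |
          ∃ k : Fin N, (k = j ∨ G.Adj j k) ∧ x = PresentedGroup.of k} := by
  have hj : m j ≠ 1 := (hm j).elim (fun h => by simp [h]) IsPrimePow.ne_one
  refine (GraphProduct.centralizer_of_eq_closure_image_of (G := G) hj).trans ?_
  exact congrArg Subgroup.closure <| Set.ext fun x =>
    ⟨fun ⟨k, hk, e⟩ => ⟨k, hk, e.symm⟩, fun ⟨k, hk, e⟩ => ⟨k, hk, e.symm⟩⟩
end
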